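/- For natural numbers x ≥ 1 and y ≥ x + 2, we have e^(xy+2y) - e^(xy+x+y+1) - y·e^(y+1) > 0. -/

import Mathlib

/-!
Put `A = x y + x + y + 1 = (x + 1)(y + 1)`. Since `y ≥ x + 2`, the first exponent is at least
`A + 1`, so the first two terms together are at least `(e - 1) e^A > e^A`. Since `x ≥ 1`,
`A ≥ 2 (y + 1)`, and `e^{2t} > t e^t` for `t = y + 1` because `e^t > t`.
-/

open Real

lemma exp_le_exp_add_one_sub_exp (a : ℝ) : exp a ≤ exp (a + 1) - exp a := by
  have h := mul_le_mul_of_nonneg_right exp_one_gt_two.le (exp_pos a).le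
  rw [exp_add, mul_comm (exp a)]
  linarith

lemma mul_exp_lt_exp_two_mul (t : ℝ) : t * exp t < exp (2 * t) := by
  have ht : t < exp t := by linarith [add_one_le_exp t]
  rw [two_mul, exp_add]
  exact mul_lt_mul_of_pos_right ht (exp_pos t)

theorem stmt_4 (x y : ℕ) (hx : 1 ≤ x) (hy : x + 2 ≤ y) :
    Real.exp ((x : ℝ) * y + 2 * y) - Real.exp ((x : ℝ) * y + x + y + 1)
      - (y : ℝ) * Real.exp ((y : ℝ) + 1) > 0 := by
  have hx' : (1 : ℝ) ≤ x := by exact_mod_cast hx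
  have hy' : (x : ℝ) + 2 ≤ y := by exact_mod_cast hy
  set A : ℝ := (x : ℝ) * y + x + y + 1
  have hA : 2 * ((y : ℝ) + 1) ≤ A := by nlinarith
  have hA1 : A + 1 ≤ (x : ℝ) * y + 2 * y := by linarith
  have key : (y : ℝ) * exp (y + 1) < exp ((x : ℝ) * y + 2 * y) - exp A :=
    calc (y : ℝ) * exp (y + 1)
        ≤ (y + 1) * exp (y + 1) := by gcongr; linarith
      _ < exp (2 * (y + 1)) := mul_exp_lt_exp_two_mul _
      _ ≤ exp A := exp_le_exp.mpr hA
      _ ≤ exp (A + 1) - exp A := exp_le_exp_add_one_sub_exp A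
      _ ≤ exp ((x : ℝ) * y + 2 * y) - exp A := by gcongr
  linarith
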